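/- arXiv:2201.12442 — 5 statements merged into one kernel-verified Lean document; each statement's English description precedes it below -/
import Mathlib

section
/- Let M be a matroid of rank r on ground set E and let S ⊆ E with |S| ≥ r, S containing no basis of M, and rank(S) < r−1. Then the family B(M) ∪ {T ⊆ S : |T| = r} fails the basis exchange axiom; i.e., S cannot be relaxed. -/
/-- The rank of a set `X` in a matroid `M` is less than `k`: every independent subset of `X`
has cardinality less than `k`. -/
def Matroid.RankLt {α : Type*} (M : Matroid α) (X : Set α) (k : ℕ) : Prop :=
  ∀ I ⊆ X, M.Indep I → I.ncard < k

/-- A family of sets satisfies the basis exchange axiom if for all members `B, B'` and all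
`e ∈ B \ B'` there is `e' ∈ B' \ B` with `(B \ {e}) ∪ {e'}` in the family. -/
def ExchangeAxiom {α : Type*} (𝓑 : Set α → Prop) : Prop :=
  ∀ B B', 𝓑 B → 𝓑 B' → ∀ e ∈ B \ B', ∃ e' ∈ B' \ B, 𝓑 ((B \ {e}) ∪ {e'})

/-!
Suppose the exchange axiom held. Fix a basis `B` and an `r`-subset `T` of `S`, and exchange some
`e ∈ T \ B` against `B`. The result cannot be a basis, for then `T \ {e}` would be an independent
subset of `S` of size `r - 1`; so it is again an `r`-subset of `S`, one element closer to `B`.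
Iterating, we reach an `r`-subset of `S` contained in `B`, i.e. an independent subset of `S` of
size `r`.
-/

namespace Matroid

variable {α : Type*} {M : Matroid α} {S B T : Set α} {r : ℕ}

theorem RankLt.exists_exchange_closer
    (hex : ExchangeAxiom (fun B => M.IsBase B ∨ (B ⊆ S ∧ B.ncard = r)))
    (hrkS : M.RankLt S (r - 1)) (hB : M.IsBase B) (hTS : T ⊆ S) (hT : T.ncard = r)
    {e : α} (he : e ∈ T \ B) :
    ∃ T' ⊆ S, T'.ncard = r ∧ T' \ B = (T \ B) \ {e} := by
  obtain ⟨e', he', hnew | ⟨hT'S, hT'⟩⟩ := hex T B (Or.inr ⟨hTS, hT⟩) (Or.inl hB) e he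
  · have hind : M.Indep (T \ {e}) := hnew.indep.subset Set.subset_union_left
    have hcard : (T \ {e}).ncard = r - 1 := by rw [Set.ncard_sdiff_singleton_of_mem he.1, hT]
    exact absurd (hrkS _ (Set.sdiff_subset.trans hTS) hind) (by omega)
  · refine ⟨_, hT'S, hT', ?_⟩
    rw [Set.union_sdiff_distrib, Set.sdiff_eq_empty.mpr (Set.singleton_subset_iff.mpr he'.1),
      Set.union_empty, sdiff_right_comm]

theorem RankLt.exists_subset_isBase_of_exchangeAxiom
    (hex : ExchangeAxiom (fun B => M.IsBase B ∨ (B ⊆ S ∧ B.ncard = r)))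
    (hrkS : M.RankLt S (r - 1)) (hB : M.IsBase B) (hTS : T ⊆ S) (hT : T.ncard = r)
    (hfin : (T \ B).Finite) :
    ∃ T' ⊆ S, T'.ncard = r ∧ T' ⊆ B := by
  induction hn : (T \ B).ncard using Nat.strong_induction_on generalizing T with
  | _ n ih =>
  obtain hTB | ⟨e, he⟩ := (T \ B).eq_empty_or_nonempty
  · exact ⟨T, hTS, hT, Set.sdiff_eq_empty.mp hTB⟩
  obtain ⟨T', hT'S, hT', hT'B⟩ := hrkS.exists_exchange_closer hex hB hTS hT he
  have hlt : (T' \ B).ncard < n := hn ▸ hT'B ▸ Set.ncard_sdiff_singleton_lt_of_mem he hfin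
  exact ih _ hlt hT'S hT' (hT'B ▸ hfin.sdiff) rfl

end Matroid

theorem stmt_3_general {α : Type*} (M : Matroid α) (r : ℕ)
    (S : Set α) (hScard : r ≤ S.ncard)
    (hrkS : M.RankLt S (r - 1)) :
    ¬ ExchangeAxiom (fun B => M.IsBase B ∨ (B ⊆ S ∧ B.ncard = r)) := by
  intro hex
  have hr : 0 < r := by
    have := hrkS ∅ (Set.empty_subset S) M.empty_indep
    rw [Set.ncard_empty] at this
    omega
  obtain ⟨B, hB⟩ := M.exists_isBase
  obtain ⟨T, hTS, hT⟩ := Set.exists_subset_card_eq hScard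
  have hTfin : T.Finite := Set.finite_of_ncard_pos (hT ▸ hr)
  obtain ⟨T', hT'S, hT', hT'B⟩ :=
    hrkS.exists_subset_isBase_of_exchangeAxiom hex hB hTS hT hTfin.sdiff
  have := hrkS T' hT'S (hB.indep.subset hT'B)
  omega

/-- Let `M` be a matroid of rank `r` on ground set `E` and let `S ⊆ E` with `|S| ≥ r`,
`S` containing no basis of `M`, and `rank(S) < r − 1`.  Then the family
`B(M) ∪ {T ⊆ S : |T| = r}` fails the basis exchange axiom; i.e. `S` cannot be relaxed. -/
theorem stmt_3 {α : Type*} (M : Matroid α) [M.Finite] (r : ℕ)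
    (hrank : ∀ B, M.IsBase B → B.ncard = r)
    (S : Set α) (hSE : S ⊆ M.E) (hScard : r ≤ S.ncard)
    (hnobase : ∀ B ⊆ S, ¬ M.IsBase B)
    (hrkS : M.RankLt S (r - 1)) :
    ¬ ExchangeAxiom (fun B => M.IsBase B ∨ (B ⊆ S ∧ B.ncard = r)) :=
  stmt_3_general M r S hScard hrkS
end

section
/- Let r ≤ s < n. The base polytope of the panhandle matroid Pan_{r,s,n}, i.e., the convex hull in ℝⁿ of the indicator vectors of the r-subsets B of [n] with |B ∩ [s]| ≥ r−1, equals { x ∈ [0,1]ⁿ : x_1 + ⋯ + x_n = r and x_{s+1} + ⋯ + x_n ≤ 1 }. -/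
/-!
The polytope `P = {x ∈ [0,1]^ι : ∑ x = r, ∑_{i ∈ T} x_i ≤ m}` is compact and convex, so by
Krein–Milman it is the convex hull of its extreme points, and it suffices to see that these are
0/1 vectors. Since `∑ x = r` is an integer, a fractional coordinate of `x ∈ P` comes with a second
one, and moving a small mass `ε` between them, in either direction, stays in `P` unless they lie on
opposite sides of `T` and `∑_{i ∈ T} x_i = m`; in that case integrality of `∑_{i ∈ T} x_i` gives
two fractional coordinates inside `T`. The panhandle polytope is `T = {s, …, n - 1}`, `m = 1`.
-/

open Finset Filter Topology

theorem convexHull_eq_of_extremePoints_subset {E : Type*} [AddCommGroup E] [Module ℝ E]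
    [TopologicalSpace E] [T2Space E] [IsTopologicalAddGroup E] [ContinuousSMul ℝ E]
    [LocallyConvexSpace ℝ E] {P V : Set E} (hPc : IsCompact P) (hP : Convex ℝ P)
    (hV : V.Finite) (hVP : V ⊆ P) (hext : P.extremePoints ℝ ⊆ V) :
    convexHull ℝ V = P := by
  refine (convexHull_min hVP hP).antisymm ?_
  calc P = closure (convexHull ℝ (P.extremePoints ℝ)) :=
        (closure_convexHull_extremePoints hPc hP).symm
    _ ⊆ closure (convexHull ℝ V) := closure_mono (convexHull_mono hext)
    _ = convexHull ℝ V := (hV.isClosed_convexHull ℝ).closure_eq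

theorem notMem_extremePoints_of_add_mem_of_sub_mem {E : Type*} [AddCommGroup E] [Module ℝ E]
    {P : Set E} {x d : E} (hd : d ≠ 0) (hadd : x + d ∈ P) (hsub : x - d ∈ P) :
    x ∉ P.extremePoints ℝ := by
  intro hx
  have hseg : x ∈ openSegment ℝ (x + d) (x - d) :=
    ⟨1 / 2, 1 / 2, by norm_num, by norm_num, by norm_num, by module⟩
  exact hd (by simpa using (hx.2 hadd hsub hseg).symm)

theorem exists_ne_mem_Ioo_of_sum_eq_natCast {ι : Type*} [DecidableEq ι] {A : Finset ι}
    {x : ι → ℝ} {N : ℕ} (hx : ∀ j ∈ A, x j ∈ Set.Icc 0 1) (hsum : ∑ j ∈ A, x j = N)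
    {k : ι} (hk : k ∈ A) (hxk : x k ∈ Set.Ioo 0 1) :
    ∃ j ∈ A, j ≠ k ∧ x j ∈ Set.Ioo 0 1 := by
  by_contra! hint
  have hbool : ∀ j ∈ A.erase k, x j = if x j = 1 then 1 else 0 := by
    intro j hj
    obtain ⟨hjk, hjA⟩ := mem_erase.1 hj
    have h01 := hx j hjA
    have hnot := hint j hjA hjk
    simp only [Set.mem_Icc, Set.mem_Ioo, not_and, not_lt] at h01 hnot
    split_ifs <;> grind
  have hsplit := add_sum_erase A x hk
  rw [sum_congr rfl hbool, sum_boole, hsum] at hsplit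
  set c := #((A.erase k).filter fun j => x j = 1)
  have h1 : c < N := by exact_mod_cast (show (c : ℝ) < N by linarith [hxk.1])
  have h2 : N < c + 1 := by exact_mod_cast (show (N : ℝ) < c + 1 by linarith [hxk.2])
  omega

theorem Finset.sub_one_le_card_filter_iff_card_filter_not_le_one {α : Type*} (B : Finset α)
    (p : α → Prop) [DecidablePred p] : #B - 1 ≤ #(B.filter p) ↔ #(B.filter (¬ p ·)) ≤ 1 := by
  have := card_filter_add_card_filter_not (s := B) p
  omega

section

variable {ι : Type*} [Fintype ι]

def cappedHypersimplex (T : Finset ι) (r m : ℕ) : Set (ι → ℝ) :=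
  {x | (∀ i, 0 ≤ x i ∧ x i ≤ 1) ∧ ∑ i, x i = r ∧ ∑ i ∈ T, x i ≤ m}

variable {T : Finset ι} {r m : ℕ}

theorem convex_cappedHypersimplex : Convex ℝ (cappedHypersimplex T r m) := by
  rintro x ⟨hx, hxr, hxm⟩ y ⟨hy, hyr, hym⟩ a b ha hb hab
  simp only [cappedHypersimplex, Set.mem_ofPred_eq, Pi.add_apply, Pi.smul_apply, smul_eq_mul,
    sum_add_distrib, ← mul_sum, hxr, hyr]
  refine ⟨fun i => ⟨?_, ?_⟩, ?_, ?_⟩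
  · nlinarith [hx i, hy i]
  · nlinarith [hx i, hy i]
  · rw [← add_mul, hab, one_mul]
  · nlinarith

theorem isCompact_cappedHypersimplex : IsCompact (cappedHypersimplex T r m) := by
  refine (isCompact_univ_pi fun _ => isCompact_Icc (a := (0 : ℝ)) (b := 1)).of_isClosed_subset
    ?_ fun x hx i _ => hx.1 i
  have hsum (A : Finset ι) : Continuous fun x : ι → ℝ => ∑ i ∈ A, x i :=
    continuous_finsetSum A fun i _ => continuous_apply i
  have hcube : IsClosed {x : ι → ℝ | ∀ i, 0 ≤ x i ∧ x i ≤ 1} := by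
    simp only [Set.ofPred_forall, Set.ofPred_and]
    exact isClosed_iInter fun i =>
      (isClosed_le continuous_const (continuous_apply i)).inter
        (isClosed_le (continuous_apply i) continuous_const)
  exact hcube.inter ((isClosed_eq (hsum univ) continuous_const).inter
    (isClosed_le (hsum T) continuous_const))

variable [DecidableEq ι]

theorem add_single_sub_single_mem_cappedHypersimplex {x : ι → ℝ}
    (hx : x ∈ cappedHypersimplex T r m) {i j : ι} (hij : i ≠ j) {ε : ℝ}
    (hi : x i + ε ∈ Set.Icc 0 1) (hj : x j - ε ∈ Set.Icc 0 1)
    (hT : ∑ k ∈ T, x k + ((if i ∈ T then ε else 0) - if j ∈ T then ε else 0) ≤ m) :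
    x + (Pi.single i ε - Pi.single j ε) ∈ cappedHypersimplex T r m := by
  obtain ⟨hx01, hxr, -⟩ := hx
  refine ⟨fun k => ?_, ?_, ?_⟩
  · by_cases hki : k = i
    · subst hki; simpa [hij] using hi
    by_cases hkj : k = j
    · subst hkj; simpa [hki, sub_eq_add_neg] using hj
    simpa [hki, hkj] using hx01 k
  · simp [sum_add_distrib, sum_sub_distrib, hxr]
  · simpa [sum_add_distrib, sum_sub_distrib, sum_pi_single'] using hT

theorem notMem_extremePoints_cappedHypersimplex {x : ι → ℝ}
    (hx : x ∈ cappedHypersimplex T r m) {i j : ι} (hij : i ≠ j)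
    (hi : x i ∈ Set.Ioo 0 1) (hj : x j ∈ Set.Ioo 0 1)
    (hT : (i ∈ T ↔ j ∈ T) ∨ ∑ k ∈ T, x k < m) :
    x ∉ (cappedHypersimplex T r m).extremePoints ℝ := by
  have hslack : ∀ᶠ ε in 𝓝 (0 : ℝ), (i ∈ T ↔ j ∈ T) ∨ ε < m - ∑ k ∈ T, x k := by
    rcases hT with hT | hT
    · exact .of_forall fun _ => .inl hT
    · exact (eventually_lt_nhds (sub_pos.2 hT)).mono fun _ => .inr
  have hsmall : ∀ᶠ ε in 𝓝[>] (0 : ℝ), 0 < ε ∧ ε < x i ∧ ε < 1 - x i ∧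
      ε < x j ∧ ε < 1 - x j ∧ ((i ∈ T ↔ j ∈ T) ∨ ε < m - ∑ k ∈ T, x k) :=
    eventually_mem_nhdsWithin.and <| nhdsWithin_le_nhds <| (eventually_lt_nhds hi.1).and <|
      (eventually_lt_nhds (sub_pos.2 hi.2)).and <| (eventually_lt_nhds hj.1).and <|
      (eventually_lt_nhds (sub_pos.2 hj.2)).and hslack
  obtain ⟨ε, hε, hεi, hεi', hεj, hεj', hεT⟩ := hsmall.exists
  have htail := hx.2.2
  refine notMem_extremePoints_of_add_mem_of_sub_mem (d := Pi.single i ε - Pi.single j ε)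
    (fun h => by simpa [hij, hε.ne'] using congrFun h i) ?_ ?_
  · refine add_single_sub_single_mem_cappedHypersimplex hx hij ⟨?_, ?_⟩ ⟨?_, ?_⟩ ?_ <;>
      try linarith
    rcases hεT with h | h <;> split_ifs <;> first | tauto | linarith
  · rw [sub_eq_add_neg, neg_sub]
    refine add_single_sub_single_mem_cappedHypersimplex hx hij.symm ⟨?_, ?_⟩ ⟨?_, ?_⟩ ?_ <;>
      try linarith
    rcases hεT with h | h <;> split_ifs <;> first | tauto | linarith

theorem eq_zero_or_eq_one_of_mem_extremePoints_cappedHypersimplex {x : ι → ℝ}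
    (hx : x ∈ (cappedHypersimplex T r m).extremePoints ℝ) (k : ι) : x k = 0 ∨ x k = 1 := by
  obtain ⟨hx01, hxr, hxm⟩ := hx.1
  by_contra! hk
  replace hk : x k ∈ Set.Ioo 0 1 :=
    ⟨(hx01 k).1.lt_of_ne' hk.1, (hx01 k).2.lt_of_ne hk.2⟩
  obtain ⟨j, -, hjk, hj⟩ := exists_ne_mem_Ioo_of_sum_eq_natCast (fun j _ => hx01 j) hxr (mem_univ k) hk
  by_cases hside : (j ∈ T ↔ k ∈ T) ∨ ∑ i ∈ T, x i < m
  · exact notMem_extremePoints_cappedHypersimplex hx.1 hjk hj hk hside hx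
  rw [not_or, not_lt] at hside
  obtain ⟨b, hbT, hb⟩ : ∃ b ∈ T, x b ∈ Set.Ioo 0 1 := by
    by_cases hkT : k ∈ T
    · exact ⟨k, hkT, hk⟩
    · exact ⟨j, by tauto, hj⟩
  obtain ⟨c, hcT, hcb, hc⟩ := exists_ne_mem_Ioo_of_sum_eq_natCast (fun j _ => hx01 j)
    (hxm.antisymm hside.2) hbT hb
  exact notMem_extremePoints_cappedHypersimplex hx.1 hcb hc hb (.inl (iff_of_true hcT hbT)) hx

def cappedHypersimplexVertices (T : Finset ι) (r m : ℕ) : Set (ι → ℝ) :=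
  {x | ∃ B : Finset ι, #B = r ∧ #(B ∩ T) ≤ m ∧ x = fun i => if i ∈ B then 1 else 0}

theorem cappedHypersimplexVertices_finite : (cappedHypersimplexVertices T r m).Finite :=
  (Set.finite_range fun B : Finset ι => fun i => if i ∈ B then (1 : ℝ) else 0).subset <| by
    rintro x ⟨B, -, -, rfl⟩
    exact ⟨B, rfl⟩

theorem cappedHypersimplexVertices_subset :
    cappedHypersimplexVertices T r m ⊆ cappedHypersimplex T r m := by
  rintro x ⟨B, hBr, hBm, rfl⟩
  refine ⟨fun i => by dsimp only; split_ifs <;> norm_num, ?_, ?_⟩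
  · simp [hBr]
  · simpa [filter_mem_eq_inter, inter_comm] using hBm

theorem extremePoints_cappedHypersimplex_subset :
    (cappedHypersimplex T r m).extremePoints ℝ ⊆ cappedHypersimplexVertices T r m := by
  intro x hx
  have hx_eq : x = fun i => if i ∈ univ.filter (x · = 1) then 1 else 0 := by
    ext i
    rcases eq_zero_or_eq_one_of_mem_extremePoints_cappedHypersimplex hx i with h | h <;> simp [h]
  obtain ⟨-, hxr, hxm⟩ := hx.1
  rw [hx_eq] at hxr hxm
  refine ⟨_, ?_, ?_, hx_eq⟩
  · simpa using hxr
  · simpa [filter_inter] using hxm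

theorem convexHull_cappedHypersimplexVertices :
    convexHull ℝ (cappedHypersimplexVertices T r m) = cappedHypersimplex T r m :=
  convexHull_eq_of_extremePoints_subset isCompact_cappedHypersimplex convex_cappedHypersimplex
    cappedHypersimplexVertices_finite cappedHypersimplexVertices_subset
    extremePoints_cappedHypersimplex_subset

end

theorem stmt_8_general (r s n : ℕ) :
    convexHull ℝ {x : Fin n → ℝ | ∃ B : Finset (Fin n),
        B.card = r ∧ r - 1 ≤ (B.filter (fun j : Fin n => (j : ℕ) < s)).card ∧
        x = fun i => if i ∈ B then 1 else 0}
      = {x : Fin n → ℝ | (∀ i, 0 ≤ x i ∧ x i ≤ 1) ∧ (∑ i, x i) = r ∧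
          (∑ i ∈ Finset.univ.filter (fun j : Fin n => s ≤ (j : ℕ)), x i) ≤ 1} := by
  convert convexHull_cappedHypersimplexVertices (r := r) (m := 1)
    (T := univ.filter fun j : Fin n => s ≤ (j : ℕ)) using 2
  · ext x
    refine exists_congr fun B => and_congr_right fun hB => and_congr_left fun _ => ?_
    rw [← hB, sub_one_le_card_filter_iff_card_filter_not_le_one, inter_filter, inter_univ]
    simp only [not_lt]
  · simp [cappedHypersimplex]

/-- Let `r ≤ s < n`.  The base polytope of the panhandle matroid `Pan_{r,s,n}`, i.e. the
convex hull in `ℝⁿ` of the indicator vectors of the `r`-subsets `B` of `[n]` with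
`|B ∩ [s]| ≥ r − 1`, equals
`{ x ∈ [0,1]ⁿ : x_1 + ⋯ + x_n = r and x_{s+1} + ⋯ + x_n ≤ 1 }`.
(Here `[n]` is modelled on `Fin n`, with `[s]` the coordinates `< s`.) -/
theorem stmt_8 (r s n : ℕ) (hr : 1 ≤ r) (hrs : r ≤ s) (hsn : s < n) :
    convexHull ℝ {x : Fin n → ℝ | ∃ B : Finset (Fin n),
        B.card = r ∧ r - 1 ≤ (B.filter (fun j : Fin n => (j : ℕ) < s)).card ∧
        x = fun i => if i ∈ B then 1 else 0}
      = {x : Fin n → ℝ | (∀ i, 0 ≤ x i ∧ x i ≤ 1) ∧ (∑ i, x i) = r ∧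
          (∑ i ∈ Finset.univ.filter (fun j : Fin n => s ≤ (j : ℕ)), x i) ≤ 1} :=
  stmt_8_general r s n
end

section
/- For nonnegative integers and the product identity of binomial coefficients: C(Q,R)·C(S,T) = ∑_{U=0}^{T} C(R−Q+S, U) · C(T+Q−S, T−U) · C(Q+U, R+T), valid as an identity of polynomials in Q and S for fixed nonnegative integers R, T. -/
/-!
Write `A = R - Q + S` and `B = T + Q - S`, so that `A + B = R + T`. Expanding `C(Q + U, R + T)` by
Chu–Vandermonde as `∑ₖ C(U, k) C(Q, R + T - k)` and summing over `U` first, trinomial revision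
`C(U, k) C(A, U) = C(A, k) C(A - k, U - k)` and Vandermonde collapse the inner sum to
`C(A, k) C(R + T - k, T - k)`. Trinomial revision once more turns
`C(R + T - k, T - k) C(Q, R + T - k)` into `C(Q, R) C(Q - R, T - k)`, and a last Vandermonde sum
gives `C(Q, R) C(A + Q - R, T) = C(Q, R) C(S, T)`.
-/

def qchoose (x : ℚ) (k : ℕ) : ℚ :=
  (∏ j ∈ Finset.range k, (x - j)) / (Nat.factorial k : ℚ)

open Finset Polynomial

namespace Ring

variable {R : Type*} [CommRing R] [BinomialRing R]

theorem choose_add_eq_sum_range (r s : R) (n : ℕ) :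
    choose (r + s) n = ∑ k ∈ range (n + 1), choose r k * choose s (n - k) := by
  rw [add_choose_eq n (Commute.all r s), Nat.sum_antidiagonal_eq_sum_range_succ_mk]

theorem natChoose_mul_choose_add (r : R) (a m : ℕ) :
    ((a + m).choose a : R) * choose r (a + m) = choose r a * choose (r - a) m := by
  rw [← nsmul_eq_mul, choose_smul_choose r (Nat.le_add_right a m), Nat.add_sub_cancel_left]

theorem sum_natChoose_mul_choose_mul_choose (a b : R) {k t : ℕ} (hkt : k ≤ t) :
    ∑ u ∈ range (t + 1), (u.choose k : R) * (choose a u * choose b (t - u))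
      = choose a k * choose (a - k + b) (t - k) := by
  obtain ⟨m, rfl⟩ := Nat.exists_eq_add_of_le hkt
  have below : ∑ u ∈ range k, (u.choose k : R) * (choose a u * choose b (k + m - u)) = 0 :=
    sum_eq_zero fun u hu => by rw [Nat.choose_eq_zero_of_lt (mem_range.1 hu), Nat.cast_zero,
      zero_mul]
  rw [add_assoc, sum_range_add, below, zero_add, Nat.add_sub_cancel_left,
    choose_add_eq_sum_range, mul_sum]
  refine sum_congr rfl fun v _ => ?_
  rw [← mul_assoc, natChoose_mul_choose_add, mul_assoc, Nat.add_sub_add_left]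

theorem sum_choose_mul_choose_mul_choose_add_natCast (a b x : R) {t n : ℕ} (htn : t ≤ n) :
    ∑ u ∈ range (t + 1), choose a u * choose b (t - u) * choose (x + u) n
      = ∑ k ∈ range (t + 1), choose a k * choose (a - k + b) (t - k) * choose x (n - k) := by
  obtain ⟨m, rfl⟩ := Nat.exists_eq_add_of_le htn
  have expand (u : ℕ) : choose (x + u) (t + m)
      = ∑ k ∈ range (t + m + 1), (u.choose k : R) * choose x (t + m - k) := by
    simp only [add_comm x, choose_add_eq_sum_range, choose_natCast]
  calc ∑ u ∈ range (t + 1), choose a u * choose b (t - u) * choose (x + u) (t + m)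
      = ∑ k ∈ range (t + 1 + m), (∑ u ∈ range (t + 1),
          (u.choose k : R) * (choose a u * choose b (t - u))) * choose x (t + m - k) := by
        simp only [expand, mul_sum, sum_mul]
        rw [sum_comm, add_right_comm]
        exact sum_congr rfl fun _ _ => sum_congr rfl fun _ _ => by ring
    _ = _ := by
        rw [sum_range_add, add_eq_left.2 (sum_eq_zero fun j _ => ?_)]
        · refine sum_congr rfl fun k hk => ?_
          rw [sum_natChoose_mul_choose_mul_choose a b (Nat.lt_succ_iff.1 (mem_range.1 hk))]
        · refine mul_eq_zero_of_left (sum_eq_zero fun u hu => ?_) _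
          rw [Nat.choose_eq_zero_of_lt (by grind), Nat.cast_zero, zero_mul]

theorem choose_mul_choose_eq_sum (q s : R) (r t : ℕ) :
    choose q r * choose s t = ∑ u ∈ range (t + 1),
      choose (r - q + s) u * choose (t + q - s) (t - u) * choose (q + u) (r + t) := by
  rw [sum_choose_mul_choose_mul_choose_add_natCast _ _ _ (Nat.le_add_left t r)]
  have term (k : ℕ) (hk : k ∈ range (t + 1)) :
      choose (r - q + s) k * choose (r - q + s - k + (t + q - s)) (t - k) * choose q (r + t - k)
        = choose q r * (choose (r - q + s) k * choose (q - r) (t - k)) := by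
    have hkt : k ≤ t := Nat.lt_succ_iff.1 (mem_range.1 hk)
    have hsum : (r : R) - q + s - k + (t + q - s) = ((r + (t - k) : ℕ) : R) := by
      push_cast [Nat.cast_sub hkt]; ring
    rw [hsum, choose_natCast, ← Nat.choose_symm_add, Nat.add_sub_assoc hkt, mul_assoc,
      natChoose_mul_choose_add]
    ring
  rw [sum_congr rfl term, ← mul_sum, ← choose_add_eq_sum_range]
  congr 2
  ring

end Ring

lemma qchoose_eq_ring_choose (x : ℚ) (k : ℕ) : qchoose x k = Ring.choose x k := by
  rw [Ring.choose_eq_smul, qchoose, ← descPochhammer_eval_eq_prod_range, smul_eq_mul,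
    div_eq_inv_mul, ← descPochhammer_map (algebraMap ℤ ℚ), eval_map_algebraMap, aeval_eq_smeval]

/-- Product identity of binomial coefficients (identity (5.28) of Graham–Knuth–Patashnik):
for fixed nonnegative integers `R, T`, as an identity of polynomials in `Q` and `S`
(equivalently, for all rational `Q` and `S`),
`C(Q,R)·C(S,T) = ∑_{U=0}^{T} C(R−Q+S, U) C(T+Q−S, T−U) C(Q+U, R+T)`. -/
theorem stmt_12 (R T : ℕ) (Q S : ℚ) :
    qchoose Q R * qchoose S T
      = ∑ U ∈ Finset.range (T + 1),
          qchoose ((R : ℚ) - Q + S) U * qchoose ((T : ℚ) + Q - S) (T - U) *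
            qchoose (Q + U) (R + T) := by
  simp only [qchoose_eq_ring_choose]
  exact Ring.choose_mul_choose_eq_sum Q S R T
end

section
/- Worpitzky's identity: for every nonnegative integer m and every integer x, x^m = ∑_{a=0}^{m−1} A(m,a) · C(x+a, m), where A(m,a) is the Eulerian number counting permutations of [m] with exactly a descents (and for m = 0 the empty sum convention gives x^0 = 1 via the a = 0 term A(0,0)C(x,0)). -/
/-- The Eulerian number `A(m, a)`: the number of permutations `w` of `[m]` with exactly `a`
descents, where a descent is a position `i ∈ [m−1]` with `w(i) > w(i+1)`. -/
def eulerian (m a : ℕ) : ℕ :=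
  (Finset.univ.filter (fun w : Equiv.Perm (Fin m) =>
    (Finset.univ.filter (fun i : Fin m => ∃ h : (i : ℕ) + 1 < m, w ⟨(i : ℕ) + 1, h⟩ < w i)).card = a)).card

open Finset Equiv

lemma qchoose_succ (x : ℚ) (k : ℕ) : qchoose x (k + 1) = qchoose x k * (x - k) / (k + 1) := by
  rw [qchoose, qchoose, prod_range_succ, Nat.factorial_succ]
  push_cast
  field_simp

lemma qchoose_add_one_succ (x : ℚ) (k : ℕ) :
    qchoose (x + 1) (k + 1) = qchoose x k * (x + 1) / (k + 1) := by
  rw [qchoose, qchoose, prod_range_succ', Nat.factorial_succ]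
  push_cast
  simp_rw [add_sub_add_right_eq_sub]
  field_simp
  ring

lemma add_one_mul_qchoose_add_sub_mul_qchoose (m : ℕ) (y d : ℚ) :
    (d + 1) * qchoose y (m + 1) + (m - d) * qchoose (y + 1) (m + 1) = (y - d) * qchoose y m := by
  rw [qchoose_succ, qchoose_add_one_succ]
  field_simp
  ring


namespace Equiv.Perm

variable {m : ℕ} (w : Perm (Fin m))

def numDescents : ℕ :=
  #{i : Fin m | ∃ h : (i : ℕ) + 1 < m, w ⟨(i : ℕ) + 1, h⟩ < w i}

def descentInd (j : ℕ) : ℕ :=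
  if h : j + 1 < m then if w ⟨j + 1, h⟩ < w ⟨j, by omega⟩ then 1 else 0 else 0

def newDescentInd (i : ℕ) : ℕ :=
  if i < m ∧ (i = 0 ∨ w.descentInd (i - 1) = 0) then 1 else 0

lemma descentInd_le_one (j : ℕ) : w.descentInd j ≤ 1 := by
  unfold descentInd
  split_ifs <;> omega

lemma newDescentInd_le_one (i : ℕ) : w.newDescentInd i ≤ 1 := by
  unfold newDescentInd
  split_ifs <;> omega

lemma descentInd_of_le {j : ℕ} (h : m ≤ j + 1) : w.descentInd j = 0 :=
  dif_neg (by omega)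

lemma numDescents_eq_sum : w.numDescents = ∑ j ∈ range m, w.descentInd j := by
  rw [numDescents, card_filter, ← Fin.sum_univ_eq_sum_range]
  refine sum_congr rfl fun i _ => ?_
  by_cases h : (i : ℕ) + 1 < m <;> simp [descentInd, h]

lemma numDescents_lt_max : w.numDescents < max m 1 := by
  cases m with
  | zero => simp [numDescents_eq_sum]
  | succ n =>
    have hle : ∑ j ∈ range n, w.descentInd j ≤ n :=
      (sum_le_sum fun j _ => w.descentInd_le_one j).trans (by simp)
    rw [numDescents_eq_sum, sum_range_succ, w.descentInd_of_le le_rfl]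
    omega

lemma sum_newDescentInd_add_numDescents :
    ∑ i ∈ range (m + 1), w.newDescentInd i + w.numDescents = m := by
  cases m with
  | zero => simp [numDescents_eq_sum, newDescentInd]
  | succ n =>
    have hfirst : w.newDescentInd 0 = 1 := if_pos ⟨n.succ_pos, .inl rfl⟩
    have hlast : w.newDescentInd (n + 1) = 0 := if_neg fun h => h.1.false
    have hmiddle : ∑ j ∈ range n, (w.newDescentInd (j + 1) + w.descentInd j) = n := by
      trans ∑ _j ∈ range n, 1
      · refine sum_congr rfl fun j hj => ?_
        have hj : j + 1 < n + 1 := by simpa using hj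
        rcases Nat.le_one_iff_eq_zero_or_eq_one.mp (w.descentInd_le_one j) with hd | hd <;>
          simp [newDescentInd, hj, hd]
      · simp
    rw [numDescents_eq_sum, sum_range_succ, sum_range_succ', sum_range_succ,
      w.descentInd_of_le le_rfl, hfirst, hlast]
    rw [sum_add_distrib] at hmiddle
    omega

-- `w` in one-line notation with the new largest value inserted at position `i`
def insertMax (i : Fin (m + 1)) : Perm (Fin (m + 1)) :=
  (finSuccEquiv' i).trans ((Equiv.optionCongr w).trans finSuccEquivLast.symm)

variable (i : Fin (m + 1))

@[simp]
lemma insertMax_apply_self : w.insertMax i i = Fin.last m := by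
  simp [insertMax]

@[simp]
lemma insertMax_apply_succAbove (j : Fin m) : w.insertMax i (i.succAbove j) = (w j).castSucc := by
  simp [insertMax, finSuccEquiv'_succAbove]

lemma insertMax_apply_of_lt {k : ℕ} (hk : k < i) (hkm : k < m) :
    w.insertMax i ⟨k, by omega⟩ = (w ⟨k, hkm⟩).castSucc := by
  rw [← insertMax_apply_succAbove, Fin.succAbove_of_castSucc_lt _ _ (by simpa [Fin.lt_def])]
  rfl

lemma insertMax_apply_succ_of_le {k : ℕ} (hk : i ≤ k) (hkm : k < m) :
    w.insertMax i ⟨k + 1, by omega⟩ = (w ⟨k, hkm⟩).castSucc := by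
  rw [← insertMax_apply_succAbove, Fin.succAbove_of_le_castSucc _ _ (by simpa [Fin.le_def])]
  rfl

lemma descentInd_insertMax_of_lt {k : ℕ} (hk : k + 1 < i) :
    (w.insertMax i).descentInd k = w.descentInd k := by
  have hkm : k + 1 < m := by omega
  simp only [descentInd, dif_pos hkm, dif_pos (by omega : k + 1 < m + 1),
    w.insertMax_apply_of_lt i hk hkm, w.insertMax_apply_of_lt i (k := k) (by omega) (by omega),
    Fin.castSucc_lt_castSucc_iff]

lemma descentInd_insertMax_pred {k : ℕ} (hk : k + 1 = i) : (w.insertMax i).descentInd k = 0 := by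
  have hi : (⟨k + 1, by omega⟩ : Fin (m + 1)) = i := Fin.ext hk
  simp [descentInd, hi, w.insertMax_apply_of_lt i (k := k) (by omega) (by omega), Fin.le_last]

lemma descentInd_insertMax_self :
    (w.insertMax i).descentInd i = if (i : ℕ) < m then 1 else 0 := by
  split_ifs with hi
  · simp [descentInd, hi, w.insertMax_apply_succ_of_le i le_rfl hi, Fin.castSucc_lt_last]
  · exact descentInd_of_le _ (by omega)

lemma descentInd_insertMax_succ_of_le {k : ℕ} (hk : i ≤ k) :
    (w.insertMax i).descentInd (k + 1) = w.descentInd k := by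
  by_cases hkm : k + 1 < m
  · simp [descentInd, hkm, w.insertMax_apply_succ_of_le i hk (by omega : k < m),
      w.insertMax_apply_succ_of_le i (k := k + 1) (by omega) hkm]
  · rw [descentInd_of_le _ (by omega), descentInd_of_le _ (by omega)]

lemma numDescents_insertMax : (w.insertMax i).numDescents = w.numDescents + w.newDescentInd i := by
  have hi : (i : ℕ) ≤ m := Nat.lt_succ_iff.mp i.isLt
  have split (n : ℕ) (f : ℕ → ℕ) (h : (i : ℕ) ≤ n) :
      ∑ k ∈ range n, f k = ∑ k ∈ range i, f k + ∑ k ∈ range (n - i), f (i + k) := by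
    rw [← sum_range_add_sum_Ico f h, sum_Ico_eq_sum_range]
  have head : ∑ k ∈ range i, (w.insertMax i).descentInd k
      + (if 0 < (i : ℕ) then w.descentInd (i - 1) else 0)
      = ∑ k ∈ range i, w.descentInd k := by
    cases hc : (i : ℕ) with
    | zero => simp
    | succ c =>
      rw [sum_range_succ, sum_range_succ, w.descentInd_insertMax_pred i hc.symm,
        sum_congr rfl fun k hk => w.descentInd_insertMax_of_lt i (by simp at hk; omega)]
      simp
  have tail : ∑ k ∈ range (m + 1 - i), (w.insertMax i).descentInd (i + k)
      = (if (i : ℕ) < m then 1 else 0) + ∑ k ∈ range (m - i), w.descentInd (i + k) := by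
    rw [show m + 1 - i = m - i + 1 by omega, sum_range_succ', add_zero,
      descentInd_insertMax_self, add_comm]
    exact congrArg₂ _ rfl (sum_congr rfl fun k _ =>
      w.descentInd_insertMax_succ_of_le i (Nat.le_add_right _ k))
  have hd := w.descentInd_le_one (i - 1)
  have hd_last : (i : ℕ) = m → w.descentInd (i - 1) = 0 :=
    fun h => w.descentInd_of_le (by omega)
  rw [numDescents_eq_sum, numDescents_eq_sum, split (m + 1) _ (by omega), split m _ hi, tail,
    ← head, newDescentInd]
  split_ifs <;> omega

theorem insertMax_bijective :
    Function.Bijective fun p : Perm (Fin m) × Fin (m + 1) => p.1.insertMax p.2 := by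
  refine (Fintype.bijective_iff_injective_and_card _).mpr
    ⟨?_, by simp [Fintype.card_perm, Nat.factorial_succ, mul_comm]⟩
  rintro ⟨w, i⟩ ⟨w', i'⟩ h
  simp only at h
  obtain rfl : i = i' := (w.insertMax i).injective <| by
    rw [insertMax_apply_self, h, insertMax_apply_self]
  have hw : w = w' := Equiv.ext fun j => Fin.castSucc_injective m <| by
    rw [← insertMax_apply_succAbove, ← insertMax_apply_succAbove, h]
  rw [hw]

variable {w} in
lemma sum_qchoose_insertMax (x : ℚ) :
    ∑ i, qchoose (x + (w.insertMax i).numDescents) (m + 1)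
      = x * qchoose (x + w.numDescents) m := by
  set d := w.numDescents
  have hcount : ∑ i ∈ range (m + 1), (w.newDescentInd i : ℚ) = m - d := by
    rw [eq_sub_iff_add_eq]; exact_mod_cast w.sum_newDescentInd_add_numDescents
  have hterm (n : ℕ) (hn : n ≤ 1) : qchoose (x + (d + n : ℕ)) (m + 1)
      = qchoose (x + d) (m + 1) + n * (qchoose (x + d + 1) (m + 1) - qchoose (x + d) (m + 1)) := by
    interval_cases n
    · simp
    · push_cast
      ring_nf
  rw [sum_congr rfl fun i _ => by rw [numDescents_insertMax, hterm _ (w.newDescentInd_le_one _)]]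
  rw [sum_add_distrib, ← sum_mul, Fin.sum_univ_eq_sum_range (fun i => (w.newDescentInd i : ℚ)),
    hcount, sum_const, card_univ, Fintype.card_fin, nsmul_eq_mul]
  push_cast
  linear_combination add_one_mul_qchoose_add_sub_mul_qchoose m (x + d) d

end Equiv.Perm

theorem sum_qchoose_numDescents (m : ℕ) (x : ℚ) :
    ∑ w : Perm (Fin m), qchoose (x + w.numDescents) m = x ^ m := by
  induction m with
  | zero => simp [qchoose]
  | succ m ih =>
    rw [← Fintype.sum_bijective _ Perm.insertMax_bijective _ _ fun _ => rfl,
      Fintype.sum_prod_type, pow_succ, ← ih, sum_mul]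
    exact sum_congr rfl fun w _ => by rw [Perm.sum_qchoose_insertMax, mul_comm]

/-- Worpitzky's identity: for every nonnegative integer `m` and every integer `x`,
`x^m = ∑_{a=0}^{m−1} A(m,a) · C(x+a, m)` (with the convention that for `m = 0` the sum
consists of the single term `A(0,0)·C(x,0) = 1`). -/
theorem stmt_13 (m : ℕ) (x : ℤ) :
    ((x : ℚ)) ^ m
      = ∑ a ∈ Finset.range (max m 1), (eulerian m a : ℚ) * qchoose ((x : ℚ) + a) m := by
  rw [← sum_qchoose_numDescents, ← sum_fiberwise_of_maps_to
    (fun w _ => mem_range.mpr (Perm.numDescents_lt_max w))]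
  refine sum_congr rfl fun a _ => ?_
  rw [sum_congr rfl fun w hw => by rw [(mem_filter.mp hw).2], sum_const, nsmul_eq_mul]
  rfl
end

section
/- There is a bijection between (i) pairs (σ, x) where σ is a permutation of [n] with exactly k cycles and x assigns to each cycle c a nonnegative integer x(c) < |c|, with total weight ∑_c x(c) = q, and (ii) chain gangs on [n] with k blocks and weight q. -/
/-- A chain gang on `[n]` (modelled on `Fin n`): a partition of `Fin n` into nonempty
blocks, each internally linearly ordered, recorded as duplicate-free lists. -/
structure ChainGang (n : ℕ) where
  blocks : Finset (List (Fin n))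
  nodup : ∀ l ∈ blocks, l.Nodup
  nonempty : ∀ l ∈ blocks, l ≠ []
  partition : ∀ x : Fin n, ∃! l, l ∈ blocks ∧ x ∈ l

/-- The weight of a block: the number of its elements smaller than its first (leader)
element. -/
def blockWeight {n : ℕ} : List (Fin n) → ℕ
  | [] => 0
  | a :: rest => rest.countP (fun x => decide (x < a))

/-- The weight of a chain gang: the sum of the weights of its blocks. -/
def ChainGang.weight {n : ℕ} (G : ChainGang n) : ℕ :=
  ∑ l ∈ G.blocks, blockWeight l

/-- A properly weighted permutation of `[n]` with `k` cycles and total weight `q`: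
a permutation `σ` together with an assignment `x` of a nonnegative integer `x(c) < |c|`
to each cycle `c` of `σ`, with `∑_c x(c) = q`.  (The assignment is recorded as a function
on all permutations vanishing off the nontrivial cycles of `σ`; fixed points, being cycles
of length `1`, are forced to carry weight `0`.)  The number of cycles of `σ`, counting
fixed points, is `σ.cycleType.card + (n − σ.cycleType.sum)`. -/
structure WeightedPerm (n k q : ℕ) where
  σ : Equiv.Perm (Fin n)
  x : Equiv.Perm (Fin n) → ℕ
  cycles : σ.cycleType.card + (n - σ.cycleType.sum) = k
  zero_off : ∀ c, c ∉ σ.cycleFactorsFinset → x c = 0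
  proper : ∀ c ∈ σ.cycleFactorsFinset, x c < c.support.card
  total : ∑ c ∈ σ.cycleFactorsFinset, x c = q

/-!
A chain gang is a permutation together with a choice of a leader in each of its cycles: reading
every cycle of `σ` from its leader gives the blocks (fixed points give singletons), and
conversely the cyclic orders of the blocks multiply back to `σ`. The weight of a block is the
rank of its leader within its cycle, so taking the `x(c)`-th smallest element of `c` (counting
from `0`) as leader matches the weights `x(c) < |c|` with the choices of leaders, and the blocks
with the cycles.
-/

open Finset Equiv Equiv.Perm

theorem ChainGang.ext {n : ℕ} {G H : ChainGang n} (h : G.blocks = H.blocks) : G = H := by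
  cases G
  cases H
  cases h
  rfl

theorem WeightedPerm.ext {n k q : ℕ} {W W' : WeightedPerm n k q} (hσ : W.σ = W'.σ)
    (hx : W.x = W'.x) : W = W' := by
  cases W
  cases W'
  cases hσ
  cases hx
  rfl

section Rank

variable {α : Type*} [LinearOrder α] {S : Finset α}

theorem Finset.card_filter_lt_orderEmbOfFin {k : ℕ} (h : #S = k) (i : Fin k) :
    #{y ∈ S | y < S.orderEmbOfFin h i} = i := by
  have hrange (y : α) (hy : y ∈ S) : ∃ j, S.orderEmbOfFin h j = y := by
    rwa [← Set.mem_range, range_orderEmbOfFin]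
  have : {y ∈ S | y < S.orderEmbOfFin h i} = (Iio i).map (S.orderEmbOfFin h).toEmbedding := by
    refine Finset.ext fun y => ?_
    rw [Finset.mem_filter, Finset.mem_map]
    constructor
    · rintro ⟨hy, hlt⟩
      obtain ⟨j, rfl⟩ := hrange y hy
      exact ⟨j, by simpa using hlt, rfl⟩
    · rintro ⟨j, hj, rfl⟩
      exact ⟨orderEmbOfFin_mem S h j, by simpa using hj⟩
  rw [this, card_map, Fin.card_Iio]

theorem Finset.card_filter_lt_sort_getD {i : ℕ} (hi : i < #S) (d : α) :
    #{y ∈ S | y < S.sort.getD i d} = i := by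
  rw [List.getD_eq_getElem _ _ (by simpa using hi)]
  exact card_filter_lt_orderEmbOfFin rfl ⟨i, hi⟩

theorem Finset.sort_getD_card_filter_lt {a : α} (ha : a ∈ S) (d : α) :
    S.sort.getD #{y ∈ S | y < a} d = a := by
  obtain ⟨j, rfl⟩ : a ∈ Set.range (S.orderEmbOfFin rfl) := by rwa [range_orderEmbOfFin]
  rw [card_filter_lt_orderEmbOfFin, List.getD_eq_getElem _ _ (by simp), orderEmbOfFin_apply]
  rfl

end Rank

theorem Equiv.Perm.toList_cycleOf {α : Type*} [Fintype α] [DecidableEq α] (σ : Perm α) (a : α) :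
    (σ.cycleOf a).toList a = σ.toList a := by
  have hcycle : (σ.cycleOf a).cycleOf a = σ.cycleOf a := by
    by_cases ha : σ a = a
    · simp [(cycleOf_eq_one_iff σ).mpr ha]
    · exact (isCycle_cycleOf σ ha).cycleOf_eq (by rwa [cycleOf_apply_self])
  refine List.ext_getElem (by simp [hcycle]) fun i _ _ => ?_
  rw [getElem_toList, getElem_toList, cycleOf_pow_apply_self]

variable {n : ℕ}

theorem blockWeight_eq_card_filter {l : List (Fin n)} (hl : l.Nodup) (hne : l ≠ []) :
    blockWeight l = #{y ∈ l.toFinset | y < l.head hne} := by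
  obtain ⟨a, t, rfl⟩ := List.exists_cons_of_ne_nil hne
  have : {y ∈ (a :: t).toFinset | y < a} = (t.filter (· < a)).toFinset := by
    ext y
    simp only [Finset.mem_filter, List.mem_toFinset, List.mem_cons, List.mem_filter,
      decide_eq_true_eq]
    exact ⟨fun ⟨hy, hya⟩ => ⟨hy.resolve_left (ne_of_lt hya), hya⟩,
      fun ⟨hy, hya⟩ => ⟨Or.inr hy, hya⟩⟩
  rw [List.head_cons, this, List.toFinset_card_of_nodup ((List.nodup_cons.mp hl).2.filter _),
    blockWeight, List.countP_eq_length_filter]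

theorem blockWeight_lt_length {l : List (Fin n)} (hne : l ≠ []) : blockWeight l < l.length := by
  obtain ⟨a, t, rfl⟩ := List.exists_cons_of_ne_nil hne
  exact Nat.lt_succ_of_le List.countP_le_length

section

variable (σ : Perm (Fin n)) (x : Perm (Fin n) → ℕ)

/-- The default value `a` is reached only when `x(c) ≥ |c|` for the cycle `c` of `a`. -/
def cycleLeader (a : Fin n) : Fin n :=
  (σ.cycleOf a).support.sort.getD (x (σ.cycleOf a)) a

def cycleBlock (a : Fin n) : List (Fin n) :=
  if a ∈ σ.support then σ.toList (cycleLeader σ x a) else [a]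

variable {σ x}

theorem cycleLeader_eq_of_card_filter_lt {a s : Fin n} (hs : s ∈ (σ.cycleOf a).support)
    (hrank : #{y ∈ (σ.cycleOf a).support | y < s} = x (σ.cycleOf a)) :
    cycleLeader σ x a = s := by
  rw [cycleLeader, ← hrank, Finset.sort_getD_card_filter_lt hs]

theorem cycleBlock_of_notMem_support {a : Fin n} (ha : a ∉ σ.support) : cycleBlock σ x a = [a] :=
  if_neg ha

theorem cycleBlock_of_mem_support {a : Fin n} (ha : a ∈ σ.support) :
    cycleBlock σ x a = σ.toList (cycleLeader σ x a) :=
  if_pos ha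

theorem nodup_cycleBlock (a : Fin n) : (cycleBlock σ x a).Nodup := by
  unfold cycleBlock
  split_ifs
  exacts [nodup_toList _ _, List.nodup_singleton a]

variable (hx : ∀ c ∈ σ.cycleFactorsFinset, x c < #c.support)
include hx

theorem lt_card_support_cycleOf {a : Fin n} (ha : a ∈ σ.support) :
    x (σ.cycleOf a) < #(σ.cycleOf a).support :=
  hx _ (cycleOf_mem_cycleFactorsFinset_iff.mpr ha)

theorem cycleLeader_mem_support_cycleOf {a : Fin n} (ha : a ∈ σ.support) :
    cycleLeader σ x a ∈ (σ.cycleOf a).support := by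
  rw [cycleLeader, List.getD_eq_getElem _ _ (by simpa using lt_card_support_cycleOf hx ha),
    ← mem_sort (· ≤ ·)]
  exact List.getElem_mem _

theorem sameCycle_cycleLeader {a : Fin n} (ha : a ∈ σ.support) :
    σ.SameCycle a (cycleLeader σ x a) :=
  (mem_support_cycleOf_iff.mp (cycleLeader_mem_support_cycleOf hx ha)).1

theorem card_filter_lt_cycleLeader {a : Fin n} (ha : a ∈ σ.support) :
    #{y ∈ (σ.cycleOf a).support | y < cycleLeader σ x a} = x (σ.cycleOf a) :=
  Finset.card_filter_lt_sort_getD (lt_card_support_cycleOf hx ha) a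

theorem cycleLeader_mem_support {a : Fin n} (ha : a ∈ σ.support) :
    cycleLeader σ x a ∈ σ.support :=
  (sameCycle_cycleLeader hx ha).mem_support_iff.mp ha

theorem cycleOf_cycleLeader {a : Fin n} (ha : a ∈ σ.support) :
    σ.cycleOf (cycleLeader σ x a) = σ.cycleOf a :=
  (sameCycle_cycleLeader hx ha).cycleOf_eq.symm

theorem formPerm_cycleBlock (a : Fin n) : (cycleBlock σ x a).formPerm = σ.cycleOf a := by
  by_cases ha : a ∈ σ.support
  · rw [cycleBlock_of_mem_support ha, formPerm_toList, cycleOf_cycleLeader hx ha]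
  · rw [cycleBlock_of_notMem_support ha, List.formPerm_singleton,
      (cycleOf_eq_one_iff σ).mpr (notMem_support.mp ha)]

theorem blockWeight_cycleBlock {a : Fin n} (ha : a ∈ σ.support) :
    blockWeight (cycleBlock σ x a) = x (σ.cycleOf a) := by
  have hs := cycleLeader_mem_support hx ha
  have hne : σ.toList (cycleLeader σ x a) ≠ [] := toList_eq_nil_iff.not_left.mpr hs
  have hhead : (σ.toList (cycleLeader σ x a)).head hne = cycleLeader σ x a := by
    rw [List.head_eq_getElem, toList_getElem_zero _ _ hs]
  have hset : (σ.toList (cycleLeader σ x a)).toFinset = (σ.cycleOf a).support := by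
    ext y
    rw [List.mem_toFinset, mem_toList_iff, ← mem_support_cycleOf_iff, cycleOf_cycleLeader hx ha]
  rw [cycleBlock_of_mem_support ha, blockWeight_eq_card_filter (nodup_toList _ _) hne, hhead, hset,
    card_filter_lt_cycleLeader hx ha]

theorem two_le_length_cycleBlock {a : Fin n} (ha : a ∈ σ.support) :
    2 ≤ (cycleBlock σ x a).length := by
  rw [cycleBlock_of_mem_support ha]
  exact two_le_length_toList_iff_mem_support.mpr (cycleLeader_mem_support hx ha)

theorem mem_cycleBlock_iff {a b : Fin n} (ha : a ∈ σ.support) :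
    b ∈ cycleBlock σ x a ↔ σ.SameCycle a b := by
  rw [cycleBlock_of_mem_support ha, mem_toList_iff]
  exact ⟨fun h => (sameCycle_cycleLeader hx ha).trans h.1,
    fun h => ⟨(sameCycle_cycleLeader hx ha).symm.trans h, cycleLeader_mem_support hx ha⟩⟩

theorem mem_cycleBlock_self (a : Fin n) : a ∈ cycleBlock σ x a := by
  by_cases ha : a ∈ σ.support
  · exact (mem_cycleBlock_iff hx ha).mpr (SameCycle.refl σ a)
  · rw [cycleBlock_of_notMem_support ha]
    exact List.mem_singleton_self a

theorem cycleBlock_eq_of_mem {a b : Fin n} (hb : b ∈ cycleBlock σ x a) :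
    cycleBlock σ x b = cycleBlock σ x a := by
  by_cases ha : a ∈ σ.support
  · have hab := (mem_cycleBlock_iff hx ha).mp hb
    have hb' := hab.mem_support_iff.mp ha
    rw [cycleBlock_of_mem_support ha, cycleBlock_of_mem_support hb', cycleLeader, cycleLeader,
      hab.cycleOf_eq, List.getD_eq_getElem, List.getD_eq_getElem]
    all_goals simpa [hab.cycleOf_eq] using lt_card_support_cycleOf hx ha
  · rw [cycleBlock_of_notMem_support ha, List.mem_singleton] at hb
    rw [hb, cycleBlock_of_notMem_support ha]

theorem cycleBlock_ne_nil (a : Fin n) : cycleBlock σ x a ≠ [] :=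
  List.ne_nil_of_mem (mem_cycleBlock_self hx a)

end

def ChainGang.ofPerm (σ : Perm (Fin n)) (x : Perm (Fin n) → ℕ)
    (hx : ∀ c ∈ σ.cycleFactorsFinset, x c < #c.support) : ChainGang n where
  blocks := univ.image (cycleBlock σ x)
  nodup := forall_mem_image.mpr fun a _ => nodup_cycleBlock a
  nonempty := forall_mem_image.mpr fun a _ => cycleBlock_ne_nil hx a
  partition a := by
    refine ⟨cycleBlock σ x a, ⟨mem_image_of_mem _ (mem_univ a), mem_cycleBlock_self hx a⟩, ?_⟩
    rintro l ⟨hl, hal⟩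
    obtain ⟨b, -, rfl⟩ := mem_image.mp hl
    exact (cycleBlock_eq_of_mem hx hal).symm

namespace ChainGang

variable {G : ChainGang n}

theorem eq_of_mem {l l' : List (Fin n)} {a : Fin n} (hl : l ∈ G.blocks) (hl' : l' ∈ G.blocks)
    (ha : a ∈ l) (ha' : a ∈ l') : l = l' :=
  (G.partition a).unique ⟨hl, ha⟩ ⟨hl', ha'⟩

theorem eq_singleton_of_mem {l : List (Fin n)} {a : Fin n} (hl : l ∈ G.blocks) (ha : a ∈ l)
    (h : ¬2 ≤ l.length) : l = [a] := by
  have hlen : l.length = 1 := by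
    have := List.length_pos_iff.mpr (G.nonempty l hl)
    omega
  obtain ⟨b, rfl⟩ := List.length_eq_one_iff.mp hlen
  rw [List.mem_singleton.mp ha]

def cycleBlocks (G : ChainGang n) : Finset (List (Fin n)) := {l ∈ G.blocks | 2 ≤ l.length}

theorem support_formPerm_of_mem_cycleBlocks {l : List (Fin n)} (hl : l ∈ G.cycleBlocks) :
    l.formPerm.support = l.toFinset := by
  obtain ⟨hl, h2⟩ := mem_filter.mp hl
  refine List.support_formPerm_of_nodup l (G.nodup l hl) ?_
  rintro a rfl
  simp at h2

theorem isCycle_formPerm_of_mem_cycleBlocks {l : List (Fin n)} (hl : l ∈ G.cycleBlocks) :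
    l.formPerm.IsCycle :=
  List.isCycle_formPerm (G.nodup l (mem_filter.mp hl).1) (mem_filter.mp hl).2

theorem eq_of_mem_support_formPerm {l l' : List (Fin n)} {a : Fin n} (hl : l ∈ G.cycleBlocks)
    (hl' : l' ∈ G.cycleBlocks) (ha : a ∈ l.formPerm.support) (ha' : a ∈ l'.formPerm.support) :
    l = l' := by
  rw [support_formPerm_of_mem_cycleBlocks hl, List.mem_toFinset] at ha
  rw [support_formPerm_of_mem_cycleBlocks hl', List.mem_toFinset] at ha'
  exact eq_of_mem (mem_filter.mp hl).1 (mem_filter.mp hl').1 ha ha'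

theorem injOn_formPerm : Set.InjOn List.formPerm (G.cycleBlocks : Set (List (Fin n))) := by
  intro l hl l' hl' h
  obtain ⟨a, ha⟩ := (isCycle_formPerm_of_mem_cycleBlocks hl).nonempty_support
  exact eq_of_mem_support_formPerm hl hl' ha (h ▸ ha)

theorem pairwise_disjoint_formPerm :
    (G.cycleBlocks.image List.formPerm : Set (Perm (Fin n))).Pairwise Perm.Disjoint := by
  simp only [coe_image]
  rintro _ ⟨l, hl, rfl⟩ _ ⟨l', hl', rfl⟩ hne
  rw [disjoint_iff_disjoint_support, Finset.disjoint_left]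
  exact fun a ha ha' => hne (congrArg _ (eq_of_mem_support_formPerm hl hl' ha ha'))

def perm (G : ChainGang n) : Perm (Fin n) :=
  (G.cycleBlocks.image List.formPerm).noncommProd id
    (pairwise_disjoint_formPerm.mono' fun _ _ => Perm.Disjoint.commute)

/-- At most one block has cyclic order `c`: this is its weight, or `0` if there is none. -/
def cycleWeight (G : ChainGang n) (c : Perm (Fin n)) : ℕ :=
  ∑ l ∈ G.cycleBlocks with l.formPerm = c, blockWeight l

theorem cycleFactorsFinset_perm : G.perm.cycleFactorsFinset = G.cycleBlocks.image List.formPerm :=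
  cycleFactorsFinset_eq_finset.mpr ⟨by
    simpa only [mem_image, forall_exists_index, and_imp, forall_apply_eq_imp_iff₂]
      using fun l hl => isCycle_formPerm_of_mem_cycleBlocks hl,
    pairwise_disjoint_formPerm, rfl⟩

theorem formPerm_mem_cycleFactorsFinset {l : List (Fin n)} (hl : l ∈ G.cycleBlocks) :
    l.formPerm ∈ G.perm.cycleFactorsFinset :=
  cycleFactorsFinset_perm ▸ mem_image_of_mem _ hl

theorem exists_mem_cycleBlocks_of_mem_support {a : Fin n} (ha : a ∈ G.perm.support) :
    ∃ l ∈ G.cycleBlocks, a ∈ l := by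
  obtain ⟨l, hl, hc⟩ := mem_image.mp
    (cycleFactorsFinset_perm ▸ cycleOf_mem_cycleFactorsFinset_iff.mpr ha)
  refine ⟨l, hl, ?_⟩
  rw [← List.mem_toFinset, ← support_formPerm_of_mem_cycleBlocks hl, hc, mem_support_cycleOf_iff]
  exact ⟨SameCycle.refl _ _, ha⟩

theorem perm_apply_of_mem {l : List (Fin n)} {a : Fin n} (hl : l ∈ G.blocks) (ha : a ∈ l) :
    G.perm a = l.formPerm a := by
  by_cases h2 : 2 ≤ l.length
  · have hlc : l ∈ G.cycleBlocks := mem_filter.mpr ⟨hl, h2⟩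
    have has : a ∈ l.formPerm.support := by
      rwa [support_formPerm_of_mem_cycleBlocks hlc, List.mem_toFinset]
    rw [cycle_is_cycleOf has (formPerm_mem_cycleFactorsFinset hlc), cycleOf_apply_self]
  · rw [eq_singleton_of_mem hl ha h2, List.formPerm_singleton, Perm.one_apply, ← notMem_support]
    intro has
    obtain ⟨l', hl', hal'⟩ := exists_mem_cycleBlocks_of_mem_support has
    exact h2 (eq_of_mem (mem_filter.mp hl').1 hl hal' ha ▸ (mem_filter.mp hl').2)

theorem mem_support_perm_iff {l : List (Fin n)} {a : Fin n} (hl : l ∈ G.blocks) (ha : a ∈ l) :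
    a ∈ G.perm.support ↔ 2 ≤ l.length := by
  rw [mem_support, perm_apply_of_mem hl ha, Ne,
    List.formPerm_apply_mem_eq_self_iff _ (G.nodup l hl) a ha, not_le]
  omega

theorem cycleOf_perm {l : List (Fin n)} {a : Fin n} (hl : l ∈ G.cycleBlocks) (ha : a ∈ l) :
    G.perm.cycleOf a = l.formPerm := by
  refine (cycle_is_cycleOf ?_ (formPerm_mem_cycleFactorsFinset hl)).symm
  rwa [support_formPerm_of_mem_cycleBlocks hl, List.mem_toFinset]

theorem cycleWeight_formPerm {l : List (Fin n)} (hl : l ∈ G.cycleBlocks) :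
    G.cycleWeight l.formPerm = blockWeight l := by
  refine sum_eq_single_of_mem l (mem_filter.mpr ⟨hl, rfl⟩) ?_
  exact fun l' hl' hne => absurd (injOn_formPerm (mem_filter.mp hl').1 hl (mem_filter.mp hl').2) hne

theorem cycleWeight_eq_zero {c : Perm (Fin n)} (hc : c ∉ G.perm.cycleFactorsFinset) :
    G.cycleWeight c = 0 :=
  sum_eq_zero fun _ hl => absurd ((mem_filter.mp hl).2 ▸
    formPerm_mem_cycleFactorsFinset (mem_filter.mp hl).1) hc

theorem cycleWeight_lt {c : Perm (Fin n)} (hc : c ∈ G.perm.cycleFactorsFinset) :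
    G.cycleWeight c < #c.support := by
  rw [cycleFactorsFinset_perm] at hc
  obtain ⟨l, hl, rfl⟩ := mem_image.mp hc
  have hlB := (mem_filter.mp hl).1
  rw [cycleWeight_formPerm hl, support_formPerm_of_mem_cycleBlocks hl,
    List.toFinset_card_of_nodup (G.nodup l hlB)]
  exact blockWeight_lt_length (G.nonempty l hlB)

theorem weight_eq_sum_cycleWeight :
    G.weight = ∑ c ∈ G.perm.cycleFactorsFinset, G.cycleWeight c := by
  rw [cycleFactorsFinset_perm, sum_image injOn_formPerm,
    sum_congr rfl fun l hl => cycleWeight_formPerm hl, cycleBlocks, sum_filter_of_ne, weight]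
  intro l hl hw
  have := blockWeight_lt_length (G.nonempty l hl)
  omega

theorem card_blocks_eq_cycleType :
    #G.blocks = G.perm.cycleType.card + (n - G.perm.cycleType.sum) := by
  have hcycles : G.perm.cycleType.card = #G.cycleBlocks := by
    rw [cycleType_def, Multiset.card_map, ← card_def, cycleFactorsFinset_perm,
      card_image_of_injOn injOn_formPerm]
  have hfixed : {l ∈ G.blocks | ¬2 ≤ l.length} = G.perm.supportᶜ.image ([·]) := by
    ext l
    simp only [mem_filter, mem_image, mem_compl]
    constructor
    · rintro ⟨hl, h2⟩
      obtain ⟨a, ha⟩ := List.exists_mem_of_ne_nil l (G.nonempty l hl)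
      exact ⟨a, (mem_support_perm_iff hl ha).not.mpr h2, (eq_singleton_of_mem hl ha h2).symm⟩
    · rintro ⟨a, ha, rfl⟩
      obtain ⟨l, ⟨hl, hal⟩, -⟩ := G.partition a
      have h2 := (mem_support_perm_iff hl hal).not.mp ha
      rw [← eq_singleton_of_mem hl hal h2]
      exact ⟨hl, h2⟩
  rw [hcycles, sum_cycleType,
    ← card_filter_add_card_filter_not (fun l : List (Fin n) => 2 ≤ l.length), hfixed,
    card_image_of_injective _ List.singleton_injective, card_compl, Fintype.card_fin,
    cycleBlocks]

section

variable {σ : Perm (Fin n)} {x : Perm (Fin n) → ℕ}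
  (hx : ∀ c ∈ σ.cycleFactorsFinset, x c < #c.support)

theorem perm_ofPerm : (ofPerm σ x hx).perm = σ := by
  ext a
  rw [perm_apply_of_mem (mem_image_of_mem _ (mem_univ a)) (mem_cycleBlock_self hx a),
    formPerm_cycleBlock hx, cycleOf_apply_self]

theorem cycleWeight_ofPerm (hzero : ∀ c, c ∉ σ.cycleFactorsFinset → x c = 0) :
    (ofPerm σ x hx).cycleWeight = x := by
  funext c
  by_cases hc : c ∈ σ.cycleFactorsFinset
  · obtain ⟨a, ha⟩ := (mem_cycleFactorsFinset_iff.mp hc).1.nonempty_support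
    have haσ := mem_cycleFactorsFinset_support_le hc ha
    have hblock : cycleBlock σ x a ∈ (ofPerm σ x hx).cycleBlocks :=
      mem_filter.mpr ⟨mem_image_of_mem _ (mem_univ a), two_le_length_cycleBlock hx haσ⟩
    rw [cycle_is_cycleOf ha hc, ← blockWeight_cycleBlock hx haσ, ← cycleWeight_formPerm hblock,
      formPerm_cycleBlock hx]
  · rw [cycleWeight_eq_zero (by rwa [perm_ofPerm]), hzero c hc]

end

theorem cycleBlock_perm {l : List (Fin n)} {a : Fin n} (hl : l ∈ G.blocks) (ha : a ∈ l) :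
    cycleBlock G.perm G.cycleWeight a = l := by
  by_cases h2 : 2 ≤ l.length
  · have hlc : l ∈ G.cycleBlocks := mem_filter.mpr ⟨hl, h2⟩
    have hne := G.nonempty l hl
    have hsupport : (G.perm.cycleOf a).support = l.toFinset := by
      rw [cycleOf_perm hlc ha, support_formPerm_of_mem_cycleBlocks hlc]
    -- the head of `l` is the leader, since its rank is the weight of `l`
    have hleader : cycleLeader G.perm G.cycleWeight a = l.head hne := by
      refine cycleLeader_eq_of_card_filter_lt ?_ ?_
      · rw [hsupport, List.mem_toFinset]
        exact List.head_mem hne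
      · rw [hsupport, cycleOf_perm hlc ha, cycleWeight_formPerm hlc,
          blockWeight_eq_card_filter (G.nodup l hl) hne]
    rw [cycleBlock_of_mem_support ((mem_support_perm_iff hl ha).mpr h2), hleader, ← toList_cycleOf,
      cycleOf_perm hlc (List.head_mem hne)]
    simpa [List.head_eq_getElem] using toList_formPerm_nontrivial l h2 (G.nodup l hl)
  · rw [cycleBlock_of_notMem_support ((mem_support_perm_iff hl ha).not.mpr h2),
      eq_singleton_of_mem hl ha h2]

theorem ofPerm_perm (G : ChainGang n) :
    ofPerm G.perm G.cycleWeight (fun _ => cycleWeight_lt) = G := by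
  refine ext (Finset.ext fun l => ⟨fun hl => ?_, fun hl => ?_⟩)
  · obtain ⟨a, -, rfl⟩ := mem_image.mp hl
    obtain ⟨l', ⟨hl', hal'⟩, -⟩ := G.partition a
    rwa [cycleBlock_perm hl' hal']
  · obtain ⟨a, ha⟩ := List.exists_mem_of_ne_nil l (G.nonempty l hl)
    exact mem_image.mpr ⟨a, mem_univ a, cycleBlock_perm hl ha⟩

end ChainGang

/-- There is a bijection between properly weighted permutations of `[n]` with `k` cycles and
total weight `q`, and chain gangs on `[n]` with `k` blocks and weight `q`. -/
theorem stmt_17 (n k q : ℕ) :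
    Nonempty (WeightedPerm n k q ≃
      {G : ChainGang n // G.blocks.card = k ∧ G.weight = q}) := by
  refine ⟨{
    toFun := fun W => ⟨ChainGang.ofPerm W.σ W.x W.proper, ?_, ?_⟩
    invFun := fun G => ⟨G.1.perm, G.1.cycleWeight, ?_, fun _ => ChainGang.cycleWeight_eq_zero,
      fun _ => ChainGang.cycleWeight_lt, ?_⟩
    left_inv := fun W => ?_
    right_inv := fun G => Subtype.ext (ChainGang.ofPerm_perm G.1) }⟩
  · rw [ChainGang.card_blocks_eq_cycleType, ChainGang.perm_ofPerm]
    exact W.cycles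
  · rw [ChainGang.weight_eq_sum_cycleWeight, ChainGang.perm_ofPerm,
      ChainGang.cycleWeight_ofPerm W.proper W.zero_off]
    exact W.total
  · exact G.1.card_blocks_eq_cycleType.symm.trans G.2.1
  · exact G.1.weight_eq_sum_cycleWeight.symm.trans G.2.2
  · exact WeightedPerm.ext (ChainGang.perm_ofPerm W.proper)
      (ChainGang.cycleWeight_ofPerm W.proper W.zero_off)
end
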